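/- Under the soft-state assumptions (there exist κ > 0, 0 < ρ_min ≤ ρ_max, J_max ≤ ρ_max, and a support set Ω_h ⊇ [0,κ] such that each h_u vanishes outside Ω_h, ρ_min ≤ ∫_{[0,κ]} h_u ≤ ∫ h_u ≤ ρ_max, J_e ≤ J_max, and J_e(x₁,…,x_K) ≥ ρ_min whenever some coordinate x_i ∈ [0,κ) and all coordinates lie in Ω_h), if Ĝ is obtained from a hypergraph G by changing the node potential at a single node v to another potential satisfying the same assumptions, then |log Z(G) − log Z(Ĝ)| ≤ 2(1 + d_v)(log ρ_max − log ρ_min), where d_v is the number of hyperedges of G incident to v. -/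

import Mathlib

open MeasureTheory Finset
open scoped ENNReal

lemma fubini_aux {N : ℕ} (v : Fin N) (F : (Fin N → ℝ) → ℝ≥0∞) (hF : Measurable F)
    (hFupd : ∀ x t, F (Function.update x v t) = F x)
    (φ : ℝ → ℝ≥0∞) (hφ : Measurable φ) :
    ∫⁻ x : Fin N → ℝ, F x * φ (x v) =
      (∫⁻ t, φ t) *
        (lmarginal (fun _ => (volume : Measure ℝ)) (Finset.univ.erase v) F (fun _ => 0)) := by
  classical
  have hf : Measurable (fun x : Fin N → ℝ => F x * φ (x v)) :=
    hF.mul (hφ.comp (measurable_pi_apply v))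
  rw [show (volume : Measure (Fin N → ℝ)) = Measure.pi (fun _ => volume) from volume_pi,
    lintegral_eq_lmarginal_univ (fun _ => (0:ℝ))]
  rw [← Finset.insert_erase (Finset.mem_univ v),
    lmarginal_insert _ hf (Finset.notMem_erase v _)]
  have step : ∀ t : ℝ,
      (lmarginal (fun _ => (volume : Measure ℝ)) (Finset.univ.erase v)
        (fun x => F x * φ (x v))) (Function.update (fun _ => (0:ℝ)) v t)
      = φ t * (lmarginal (fun _ => (volume : Measure ℝ)) (Finset.univ.erase v) F
          (fun _ => 0)) := by
    intro t
    simp only [lmarginal]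
    have hsw : ∀ y : (i : Finset.univ.erase v) → ℝ,
        Function.updateFinset (Function.update (fun _ => (0:ℝ)) v t) (Finset.univ.erase v) y
        = Function.update (Function.updateFinset (fun _ => (0:ℝ)) (Finset.univ.erase v) y) v t := by
      intro y
      funext i
      by_cases hiv : i = v
      · subst hiv
        simp [Function.updateFinset, Function.update_self]
      · by_cases hi : i ∈ Finset.univ.erase v
        · simp [Function.updateFinset, hi, Function.update_of_ne hiv]
        · simp [Function.updateFinset, hi, Function.update_of_ne hiv]
    simp_rw [hsw, hFupd, Function.update_self]
    have hm : Measurable (fun y : (i : Finset.univ.erase v) → ℝ =>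
        F (Function.updateFinset (fun _ => (0:ℝ)) (Finset.univ.erase v) y)) :=
      hF.comp measurable_updateFinset
    rw [lintegral_mul_const _ hm, mul_comm]
  simp_rw [step]
  rw [lintegral_mul_const _ hφ, Finset.erase_insert (Finset.notMem_erase v _)]

lemma log_abs_sub_le_aux {a b m M : ℝ} (hm : 0 < m) (h1 : m ≤ a) (h2 : a ≤ M)
    (h3 : m ≤ b) (h4 : b ≤ M) :
    |Real.log a - Real.log b| ≤ Real.log M - Real.log m := by
  have ha : 0 < a := lt_of_lt_of_le hm h1
  have hb : 0 < b := lt_of_lt_of_le hm h3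
  rw [abs_sub_le_iff]
  constructor
  · have := Real.log_le_log ha h2
    have := Real.log_le_log hm h3
    linarith
  · have := Real.log_le_log hb h4
    have := Real.log_le_log hm h1
    linarith

open MeasureTheory in
theorem stmt12 (N M K : ℕ) (hN : 0 < N) (hK : 0 < K)
    (E : Fin M → Fin K → Fin N)
    (h : Fin N → ℝ → ℝ) (J : Fin M → (Fin K → ℝ) → ℝ)
    (v : Fin N) (h' : ℝ → ℝ)
    (hmeas : ∀ u, Measurable (h u)) (h'meas : Measurable h')
    (Jmeas : ∀ e, Measurable (J e))
    (hnonneg : ∀ u x, 0 ≤ h u x) (h'nonneg : ∀ x, 0 ≤ h' x)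
    (Jnonneg : ∀ e x, 0 ≤ J e x)
    (κ ρmin ρmax Jmax : ℝ) (Ωh : Set ℝ)
    (hκ : 0 < κ) (hρ : 0 < ρmin) (hρρ : ρmin ≤ ρmax) (hJρ : Jmax ≤ ρmax)
    (hΩ : Set.Icc 0 κ ⊆ Ωh)
    (hsupp : ∀ u x, x ∉ Ωh → h u x = 0) (h'supp : ∀ x, x ∉ Ωh → h' x = 0)
    (hint1 : ∀ u, ρmin ≤ ∫ x in Set.Icc 0 κ, h u x)
    (hint2 : ∀ u, (∫ x in Set.Icc 0 κ, h u x) ≤ ∫ x, h u x)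
    (hint3 : ∀ u, (∫ x, h u x) ≤ ρmax)
    (h'int1 : ρmin ≤ ∫ x in Set.Icc 0 κ, h' x)
    (h'int2 : (∫ x in Set.Icc 0 κ, h' x) ≤ ∫ x, h' x)
    (h'int3 : (∫ x, h' x) ≤ ρmax)
    (hJmax : ∀ e x, J e x ≤ Jmax)
    (hJmin : ∀ e (x : Fin K → ℝ),
      (∃ i, x i ∈ Set.Ico 0 κ) → (∀ k, x k ∈ Ωh) → ρmin ≤ J e x) :
    |Real.log (∫ x : Fin N → ℝ,
        (∏ u, h u (x u)) * ∏ e, J e (fun k => x (E e k))) -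
     Real.log (∫ x : Fin N → ℝ,
        (∏ u, Function.update h v h' u (x u)) * ∏ e, J e (fun k => x (E e k)))| ≤
    2 * (1 + ((Finset.univ.filter fun e : Fin M => ∃ k, E e k = v).card : ℝ)) *
      (Real.log ρmax - Real.log ρmin) := by
  classical
  set s : Finset (Fin M) := Finset.univ.filter (fun e : Fin M => ∃ k, E e k = v) with hsdef
  set d : ℕ := s.card with hddef
  set a : ℝ≥0∞ := ENNReal.ofReal ρmin with hadef
  set b : ℝ≥0∞ := ENNReal.ofReal ρmax with hbdef
  set F₀ : (Fin N → ℝ) → ℝ≥0∞ := fun x =>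
    (∏ u ∈ Finset.univ.erase v, ENNReal.ofReal (h u (x u))) *
      ∏ e ∈ sᶜ, ENNReal.ofReal (J e fun k => x (E e k)) with hF₀def
  have hF₀meas : Measurable F₀ := by
    apply Measurable.mul
    · exact Finset.measurable_prod _ fun u _ =>
        ENNReal.measurable_ofReal.comp ((hmeas u).comp (measurable_pi_apply u))
    · exact Finset.measurable_prod _ fun e _ =>
        ENNReal.measurable_ofReal.comp ((Jmeas e).comp
          (measurable_pi_lambda _ fun k => measurable_pi_apply (E e k)))
  have hEne : ∀ e ∈ sᶜ, ∀ k, E e k ≠ v := by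
    intro e he k
    simp only [hsdef, Finset.mem_compl, Finset.mem_filter, Finset.mem_univ, true_and] at he
    push_neg at he
    exact he k
  have hF₀upd : ∀ x t, F₀ (Function.update x v t) = F₀ x := by
    intro x t
    have e1 : (∏ u ∈ Finset.univ.erase v, ENNReal.ofReal (h u (Function.update x v t u)))
        = ∏ u ∈ Finset.univ.erase v, ENNReal.ofReal (h u (x u)) :=
      Finset.prod_congr rfl fun u hu => by
        rw [Function.update_of_ne (Finset.mem_erase.mp hu).1]
    have e2 : (∏ e ∈ sᶜ, ENNReal.ofReal (J e fun k => Function.update x v t (E e k)))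
        = ∏ e ∈ sᶜ, ENNReal.ofReal (J e fun k => x (E e k)) :=
      Finset.prod_congr rfl fun e he => by
        rw [show (fun k => Function.update x v t (E e k)) = fun k => x (E e k) from
          funext fun k => Function.update_of_ne (hEne e he k) _ _]
    rw [hF₀def]
    simp only
    rw [e1, e2]
  set C : ℝ≥0∞ :=
    lmarginal (fun _ => (volume : Measure ℝ)) (Finset.univ.erase v) F₀ (fun _ => 0) with hCdef
  have key : ∀ p : ℝ → ℝ, Measurable p → (∀ x, 0 ≤ p x) → (∀ x, x ∉ Ωh → p x = 0) →
      ρmin ≤ (∫ x in Set.Icc 0 κ, p x) → (∫ x in Set.Icc 0 κ, p x) ≤ ∫ x, p x →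
      (∫ x, p x) ≤ ρmax →
      ∃ zl : ℝ≥0∞,
        (∫ x : Fin N → ℝ,
          (∏ u, Function.update h v p u (x u)) * ∏ e, J e (fun k => x (E e k))) = zl.toReal ∧
        a ^ (d + 1) * C ≤ zl ∧ zl ≤ b ^ (d + 1) * C := by
    intro p hpm hp0 hpsupp hp1 hp2 hp3
    set a : ℝ≥0∞ := ENNReal.ofReal ρmin with hadef
    set b : ℝ≥0∞ := ENNReal.ofReal ρmax with hbdef
    have hpint : Integrable p := by
      by_contra hc
      rw [integral_undef hc] at hp2
      linarith
    set H : Fin N → ℝ → ℝ := Function.update h v p with hHdef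
    have hHm : ∀ u, Measurable (H u) := by
      intro u
      by_cases hu : u = v
      · subst hu; simpa [hHdef] using hpm
      · simpa [hHdef, Function.update_of_ne hu] using hmeas u
    have hH0 : ∀ u t, 0 ≤ H u t := by
      intro u t
      by_cases hu : u = v
      · subst hu; simpa [hHdef] using hp0 t
      · simpa [hHdef, Function.update_of_ne hu] using hnonneg u t
    -- the ENNReal integrand and its decomposition
    set G : (Fin N → ℝ) → ℝ≥0∞ := fun x =>
      (∏ u, ENNReal.ofReal (H u (x u))) * ∏ e, ENNReal.ofReal (J e fun k => x (E e k))
      with hGdef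
    have hGdec : ∀ x, G x = (F₀ x * ENNReal.ofReal (p (x v))) *
        ∏ e ∈ s, ENNReal.ofReal (J e fun k => x (E e k)) := by
      intro x
      have e1 : (∏ u, ENNReal.ofReal (H u (x u))) =
          ENNReal.ofReal (p (x v)) * ∏ u ∈ Finset.univ.erase v, ENNReal.ofReal (h u (x u)) := by
        rw [← Finset.mul_prod_erase Finset.univ _ (Finset.mem_univ v)]
        congr 1
        · simp [hHdef]
        · apply Finset.prod_congr rfl
          intro u hu
          rw [hHdef, Function.update_of_ne (Finset.mem_erase.mp hu).1]
      have e2 : (∏ e, ENNReal.ofReal (J e fun k => x (E e k))) =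
          (∏ e ∈ s, ENNReal.ofReal (J e fun k => x (E e k))) *
            ∏ e ∈ sᶜ, ENNReal.ofReal (J e fun k => x (E e k)) :=
        (Finset.prod_mul_prod_compl s _).symm
      rw [hGdef]
      simp only
      rw [e1, e2, hF₀def]
      ring
    have hGmeas : Measurable G := by
      rw [hGdef]
      apply Measurable.mul
      · exact Finset.measurable_prod _ fun u _ =>
          ENNReal.measurable_ofReal.comp ((hHm u).comp (measurable_pi_apply u))
      · exact Finset.measurable_prod _ fun e _ =>
          ENNReal.measurable_ofReal.comp ((Jmeas e).comp
            (measurable_pi_lambda _ fun k => measurable_pi_apply (E e k)))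
    have hφmeas : Measurable (fun t => ENNReal.ofReal (p t)) :=
      ENNReal.measurable_ofReal.comp hpm
    have hFφmeas : Measurable (fun x : Fin N → ℝ => F₀ x * ENNReal.ofReal (p (x v))) :=
      hF₀meas.mul (hφmeas.comp (measurable_pi_apply v))
    refine ⟨∫⁻ x, G x, ?_, ?_, ?_⟩
    · -- Bochner integral equals toReal of lintegral
      have hfmeas : Measurable (fun x : Fin N → ℝ =>
          (∏ u, H u (x u)) * ∏ e, J e (fun k => x (E e k))) := by
        apply Measurable.mul
        · exact Finset.measurable_prod _ fun u _ => (hHm u).comp (measurable_pi_apply u)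
        · exact Finset.measurable_prod _ fun e _ => (Jmeas e).comp
            (measurable_pi_lambda _ fun k => measurable_pi_apply (E e k))
      have hf0 : ∀ x : Fin N → ℝ, 0 ≤ (∏ u, H u (x u)) * ∏ e, J e (fun k => x (E e k)) := by
        intro x
        exact mul_nonneg (Finset.prod_nonneg fun u _ => hH0 u _)
          (Finset.prod_nonneg fun e _ => Jnonneg e _)
      rw [show (fun x : Fin N → ℝ => (∏ u, Function.update h v p u (x u))
            * ∏ e, J e (fun k => x (E e k)))
          = fun x => (∏ u, H u (x u)) * ∏ e, J e (fun k => x (E e k)) from rfl]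
      rw [integral_eq_lintegral_of_nonneg_ae (ae_of_all _ hf0) hfmeas.aestronglyMeasurable]
      congr 1
      apply lintegral_congr
      intro x
      rw [ENNReal.ofReal_mul (Finset.prod_nonneg fun u _ => hH0 u _),
        ENNReal.ofReal_prod_of_nonneg (fun u _ => hH0 u _),
        ENNReal.ofReal_prod_of_nonneg (fun e _ => Jnonneg e _)]
    · -- lower bound
      set φ₂ : ℝ → ℝ≥0∞ := fun t => Set.indicator (Set.Ico 0 κ)
        (fun t => ENNReal.ofReal (p t)) t with hφ₂def
      have hφ₂meas : Measurable φ₂ := hφmeas.indicator measurableSet_Ico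
      have hpoint : ∀ x : Fin N → ℝ, (F₀ x * φ₂ (x v)) * a ^ d ≤ G x := by
        intro x
        rw [hGdec x]
        by_cases hxv : x v ∈ Set.Ico 0 κ
        · rw [hφ₂def]
          simp only
          rw [Set.indicator_of_mem hxv]
          by_cases h0 : F₀ x * ENNReal.ofReal (p (x v)) = 0
          · rw [h0, zero_mul]
            exact zero_le
          · apply mul_le_mul_right
            rw [hddef, ← Finset.prod_const]
            apply Finset.prod_le_prod'
            intro e he
            apply ENNReal.ofReal_le_ofReal
            obtain ⟨k0, hk0⟩ : ∃ k, E e k = v := by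
              simpa [hsdef, Finset.mem_filter] using he
            apply hJmin
            · exact ⟨k0, by rw [hk0]; exact hxv⟩
            · intro k
              by_cases hkv : E e k = v
              · rw [hkv]
                exact hΩ ⟨hxv.1, le_of_lt hxv.2⟩
              · by_contra hnot
                apply h0
                have hz : h (E e k) (x (E e k)) = 0 := hsupp _ _ hnot
                have hprod : (∏ u ∈ Finset.univ.erase v, ENNReal.ofReal (h u (x u))) = 0 :=
                  Finset.prod_eq_zero (Finset.mem_erase.mpr ⟨hkv, Finset.mem_univ _⟩)
                    (by simp [hz])
                rw [hF₀def]
                simp only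
                rw [hprod, zero_mul, zero_mul]
        · rw [hφ₂def]
          simp only
          rw [Set.indicator_of_notMem hxv, mul_zero, zero_mul]
          exact zero_le
      have hφ₂int : a ≤ ∫⁻ t, φ₂ t := by
        rw [hφ₂def]
        simp only
        rw [lintegral_indicator measurableSet_Ico]
        rw [← ofReal_integral_eq_lintegral_ofReal hpint.integrableOn
          (ae_of_all _ fun t => hp0 t)]
        apply ENNReal.ofReal_le_ofReal
        rw [← integral_Icc_eq_integral_Ico]
        exact hp1
      calc a ^ (d + 1) * C = ((a * C) * a ^ d) := by ring
      _ ≤ ((∫⁻ t, φ₂ t) * C) * a ^ d := by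
          exact mul_le_mul_left (mul_le_mul_left hφ₂int C) _
      _ = (∫⁻ x : Fin N → ℝ, F₀ x * φ₂ (x v)) * a ^ d := by
          rw [fubini_aux v F₀ hF₀meas hF₀upd φ₂ hφ₂meas, hCdef]
      _ = ∫⁻ x : Fin N → ℝ, (F₀ x * φ₂ (x v)) * a ^ d := by
          have hm2 : Measurable (fun x : Fin N → ℝ => F₀ x * φ₂ (x v)) :=
            hF₀meas.mul (hφ₂meas.comp (measurable_pi_apply v))
          rw [lintegral_mul_const _ hm2]
      _ ≤ ∫⁻ x, G x := lintegral_mono hpoint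
    · -- upper bound
      have hpoint : ∀ x : Fin N → ℝ, G x ≤ (F₀ x * ENNReal.ofReal (p (x v))) * b ^ d := by
        intro x
        rw [hGdec x]
        apply mul_le_mul_right
        rw [hddef, ← Finset.prod_const]
        apply Finset.prod_le_prod'
        intro e _
        exact ENNReal.ofReal_le_ofReal ((hJmax e _).trans hJρ)
      have hφint : (∫⁻ t, ENNReal.ofReal (p t)) ≤ b := by
        rw [← ofReal_integral_eq_lintegral_ofReal hpint (ae_of_all _ fun t => hp0 t)]
        exact ENNReal.ofReal_le_ofReal hp3
      calc (∫⁻ x, G x) ≤ ∫⁻ x : Fin N → ℝ, (F₀ x * ENNReal.ofReal (p (x v))) * b ^ d :=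
          lintegral_mono hpoint
      _ = (∫⁻ x : Fin N → ℝ, F₀ x * ENNReal.ofReal (p (x v))) * b ^ d := by
          rw [lintegral_mul_const _ hFφmeas]
      _ = ((∫⁻ t, ENNReal.ofReal (p t)) * C) * b ^ d := by
          rw [fubini_aux v F₀ hF₀meas hF₀upd _ hφmeas, hCdef]
      _ ≤ (b * C) * b ^ d := mul_le_mul_left (mul_le_mul_left hφint C) _
      _ = b ^ (d + 1) * C := by ring
  have hz1 := key (h v) (hmeas v) (hnonneg v) (hsupp v) (hint1 v) (hint2 v) (hint3 v)
  rw [Function.update_eq_self] at hz1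
  obtain ⟨z1, hz1eq, hz1lo, hz1hi⟩ := hz1
  obtain ⟨z2, hz2eq, hz2lo, hz2hi⟩ := key h' h'meas h'nonneg h'supp h'int1 h'int2 h'int3
  rw [hz1eq, hz2eq]
  have hΔ : 0 ≤ Real.log ρmax - Real.log ρmin := sub_nonneg.mpr (Real.log_le_log hρ hρρ)
  have hd0 : (0:ℝ) ≤ 2 * (1 + (d:ℝ)) := by positivity
  by_cases hC0 : C = 0
  · have e1 : z1 = 0 := le_antisymm (by simpa [hC0] using hz1hi) zero_le
    have e2 : z2 = 0 := le_antisymm (by simpa [hC0] using hz2hi) zero_le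
    rw [e1, e2]
    simp only [ENNReal.toReal_zero, Real.log_zero, sub_self, abs_zero]
    exact mul_nonneg hd0 hΔ
  by_cases hCt : C = ⊤
  · have ha0 : a ^ (d + 1) ≠ 0 := by
      apply pow_ne_zero
      rw [hadef]
      simp only [ne_eq, ENNReal.ofReal_eq_zero, not_le]
      exact hρ
    have e1 : z1 = ⊤ := by
      rw [hCt, ENNReal.mul_top ha0] at hz1lo
      exact top_le_iff.mp hz1lo
    have e2 : z2 = ⊤ := by
      rw [hCt, ENNReal.mul_top ha0] at hz2lo
      exact top_le_iff.mp hz2lo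
    rw [e1, e2]
    simp only [ENNReal.toReal_top, Real.log_zero, sub_self, abs_zero]
    exact mul_nonneg hd0 hΔ
  · have hCtr : 0 < C.toReal := ENNReal.toReal_pos hC0 hCt
    have hbC : b ^ (d + 1) * C ≠ ⊤ := by
      apply ENNReal.mul_ne_top _ hCt
      exact ENNReal.pow_ne_top ENNReal.ofReal_ne_top
    have hz1t : z1 ≠ ⊤ := ne_top_of_le_ne_top hbC hz1hi
    have hz2t : z2 ≠ ⊤ := ne_top_of_le_ne_top hbC hz2hi
    have hacomp : (a ^ (d + 1) * C).toReal = ρmin ^ (d + 1) * C.toReal := by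
      rw [ENNReal.toReal_mul, ENNReal.toReal_pow, hadef, ENNReal.toReal_ofReal hρ.le]
    have hbcomp : (b ^ (d + 1) * C).toReal = ρmax ^ (d + 1) * C.toReal := by
      rw [ENNReal.toReal_mul, ENNReal.toReal_pow, hbdef,
        ENNReal.toReal_ofReal (hρ.trans_le hρρ).le]
    have h1 : ρmin ^ (d + 1) * C.toReal ≤ z1.toReal := by
      rw [← hacomp]; exact ENNReal.toReal_mono hz1t hz1lo
    have h2 : z1.toReal ≤ ρmax ^ (d + 1) * C.toReal := by
      rw [← hbcomp]; exact ENNReal.toReal_mono hbC hz1hi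
    have h3 : ρmin ^ (d + 1) * C.toReal ≤ z2.toReal := by
      rw [← hacomp]; exact ENNReal.toReal_mono hz2t hz2lo
    have h4 : z2.toReal ≤ ρmax ^ (d + 1) * C.toReal := by
      rw [← hbcomp]; exact ENNReal.toReal_mono hbC hz2hi
    have hm : 0 < ρmin ^ (d + 1) * C.toReal := by positivity
    refine (log_abs_sub_le_aux hm h1 h2 h3 h4).trans ?_
    rw [Real.log_mul (pow_ne_zero _ (ne_of_gt (hρ.trans_le hρρ))) (ne_of_gt hCtr),
      Real.log_mul (pow_ne_zero _ (ne_of_gt hρ)) (ne_of_gt hCtr),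
      Real.log_pow, Real.log_pow]
    push_cast
    nlinarith [hΔ, (Nat.cast_nonneg d : (0:ℝ) ≤ (d:ℝ))]
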